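/- arXiv:math/0406239 — 3 statements merged into one kernel-verified Lean document; each statement's English description precedes it below -/
import Mathlib

section
/- Let A be a k-algebra, δ a derivation on A, x ∈ A, y ∈ A, and α, β ∈ k. Then for every natural number n, (δ - (α+β)·id)^n(xy) = Σ_{i=0}^n binomial(n,i) · (δ - α·id)^i(x) · (δ - β·id)^{n-i}(y). -/
/-!
Splitting `α + β` between the two factors, `δ - (α + β)` satisfies the twisted Leibniz rule
`D (u * v) = u * D₂ v + D₁ u * v` with `D₁ = δ - α`, `D₂ = δ - β`; the usual induction with
Pascal's rule gives the binomial formula for any such triple `D, D₁, D₂`.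
-/

open Finset

theorem Module.End.pow_apply_mul_of_apply_mul {R A : Type*} [Semiring R]
    [NonUnitalNonAssocSemiring A] [Module R A] {D D₁ D₂ : Module.End R A}
    (h : ∀ u v : A, D (u * v) = u * D₂ v + D₁ u * v) (x y : A) (n : ℕ) :
    (D ^ n) (x * y) = ∑ ij ∈ antidiagonal n, n.choose ij.1 • ((D₁ ^ ij.1) x * (D₂ ^ ij.2) y) := by
  induction n with
  | zero => simp
  | succ n ih =>
    rw [sum_antidiagonal_choose_succ_nsmul (fun i j => (D₁ ^ i) x * (D₂ ^ j) y) n]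
    simp only [pow_succ', Module.End.mul_apply, ih, map_sum, map_nsmul, h, smul_add,
      sum_add_distrib]
    congr 1
    refine sum_congr rfl fun ⟨i, j⟩ hij ↦ ?_
    rw [n.choose_symm_of_eq_add (mem_antidiagonal.1 hij).symm]

theorem sub_smul_one_apply_mul {k A : Type*} [CommRing k] [NonUnitalNonAssocRing A] [Module k A]
    [SMulCommClass k A A] [IsScalarTower k A A] {δ : Module.End k A}
    (hder : ∀ x y : A, δ (x * y) = x * δ y + δ x * y) (α β : k) (u v : A) :
    (δ - (α + β) • 1) (u * v) = u * (δ - β • 1) v + (δ - α • 1) u * v := by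
  simp only [LinearMap.sub_apply, LinearMap.add_apply, LinearMap.smul_apply,
    Module.End.one_apply, hder, add_smul, mul_sub, sub_mul, mul_smul_comm, smul_mul_assoc]
  abel

/-- For a derivation `δ` on a (not necessarily associative or commutative)
`k`-algebra `A`, elements `x, y ∈ A`, scalars `α, β ∈ k` and any `n ∈ ℕ`,
`(δ - (α+β)·id)^n (xy) = Σ_{i=0}^n C(n,i) (δ - α·id)^i(x) · (δ - β·id)^{n-i}(y)`. -/
theorem derivation_shifted_leibniz_pow
    {k A : Type} [Field k]
    [NonUnitalNonAssocRing A] [Module k A] [SMulCommClass k A A] [IsScalarTower k A A]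
    (δ : Module.End k A)
    (hder : ∀ x y : A, δ (x * y) = x * δ y + δ x * y)
    (x y : A) (α β : k) (n : ℕ) :
    ((δ - (α + β) • 1 : Module.End k A) ^ n) (x * y)
      = ∑ i ∈ Finset.range (n + 1), (n.choose i : k) •
          ((((δ - α • 1 : Module.End k A) ^ i) x) * (((δ - β • 1 : Module.End k A) ^ (n - i)) y)) := by
  rw [Module.End.pow_apply_mul_of_apply_mul (sub_smul_one_apply_mul hder α β) x y n,
    Nat.sum_antidiagonal_eq_sum_range_succ_mk]
  simp only [Nat.cast_smul_eq_nsmul]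
end

section
/- Let A = ⊕_{i∈ℤ} A_i be a ℤ-graded ℂ-algebra with grading derivation δ (δ(a) = i·a for a ∈ A_i), and let ∂ = Σ_{i=k}^{l} ∂_i be a locally nilpotent derivation with pairwise commuting homogeneous components ∂_i of strictly positive degrees i ≥ k > 0. Set ∂' = Σ_{i=k}^{l} ∂_i / i. Then ∂' is a locally nilpotent derivation and [δ, ∂'] = ∂. -/
/-!
Each `∂ᵢ` raises degrees by `i`, so `[δ, ∂ᵢ] = i ∂ᵢ`, which gives `[δ, ∂'] = ∂` at once.
For local nilpotency, the point is that the top-degree component of a locally nilpotent sum of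
homogeneous operators is itself locally nilpotent: on `a` homogeneous of degree `d`, `∂ⁿ a` and
`∂ₗⁿ a` differ by terms of degree `< d + n l`, so `∂ⁿ a = 0` forces `∂ₗⁿ a = 0`. Subtracting the
top component (a commuting locally nilpotent operator) and repeating shows that every `∂ᵢ` is
locally nilpotent, hence so is the commuting combination `∂'`.
-/

open Module Module.End

namespace Module.End

variable {R M : Type*} [CommRing R] [AddCommGroup M] [Module R M]

def IsLocallyNilpotent (f : End R M) : Prop :=
  ∀ m : M, ∃ n : ℕ, (f ^ n) m = 0

theorem isLocallyNilpotent_iff_maxGenEigenspace_eq_top {f : End R M} :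
    f.IsLocallyNilpotent ↔ f.maxGenEigenspace 0 = ⊤ := by
  simp only [IsLocallyNilpotent, Submodule.eq_top_iff', mem_maxGenEigenspace, zero_smul, sub_zero]

theorem isLocallyNilpotent_of_iSup_eq_top {ι : Type*} {N : ι → Submodule R M}
    (hN : ⨆ i, N i = ⊤) {f : End R M} (h : ∀ i, ∀ m ∈ N i, ∃ n : ℕ, (f ^ n) m = 0) :
    f.IsLocallyNilpotent := by
  rw [isLocallyNilpotent_iff_maxGenEigenspace_eq_top, eq_top_iff, ← hN]
  exact iSup_le fun i m hm => (mem_maxGenEigenspace _ _ _).2 (by simpa using h i m hm)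

namespace IsLocallyNilpotent

theorem add {f g : End R M} (hfg : Commute f g) (hf : f.IsLocallyNilpotent)
    (hg : g.IsLocallyNilpotent) : (f + g).IsLocallyNilpotent := by
  rw [isLocallyNilpotent_iff_maxGenEigenspace_eq_top] at *
  have := genEigenspace_inf_le_add f g 0 0 ⊤ ⊤ hfg
  rw [add_zero, top_add] at this
  exact eq_top_iff.2 (le_trans (le_inf hf.ge hg.ge) this)

theorem smul {f : End R M} (hf : f.IsLocallyNilpotent) (t : R) :
    (t • f).IsLocallyNilpotent := by
  rw [isLocallyNilpotent_iff_maxGenEigenspace_eq_top] at *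
  have := genEigenspace_le_smul f 0 t ⊤
  rw [mul_zero] at this
  exact eq_top_iff.2 (le_trans hf.ge this)

theorem sub {f g : End R M} (hfg : Commute f g) (hf : f.IsLocallyNilpotent)
    (hg : g.IsLocallyNilpotent) : (f - g).IsLocallyNilpotent := by
  rw [sub_eq_add_neg, ← neg_one_smul R g]
  exact hf.add (hfg.smul_right _) (hg.smul _)

theorem sum {ι : Type*} {s : Finset ι} {f : ι → End R M}
    (hcomm : ∀ i ∈ s, ∀ j ∈ s, Commute (f i) (f j))
    (hf : ∀ i ∈ s, (f i).IsLocallyNilpotent) : (∑ i ∈ s, f i).IsLocallyNilpotent := by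
  classical
  induction s using Finset.induction_on with
  | empty => exact fun m => ⟨1, by simp⟩
  | insert a s ha ih =>
    rw [Finset.sum_insert ha]
    refine (hf a (s.mem_insert_self a)).add ?_ (ih ?_ ?_)
    · exact Commute.sum_right _ _ _ fun j hj =>
        hcomm a (s.mem_insert_self a) j (Finset.mem_insert_of_mem hj)
    · exact fun i hi j hj => hcomm i (Finset.mem_insert_of_mem hi) j (Finset.mem_insert_of_mem hj)
    · exact fun i hi => hf i (Finset.mem_insert_of_mem hi)

end IsLocallyNilpotent

end Module.End

section Graded

variable {R M : Type*} [CommRing R] [AddCommGroup M] [Module R M] (𝒜 : ℤ → Submodule R M)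

def gradedBelow (c : ℤ) : Submodule R M :=
  ⨆ m ∈ Set.Iio c, 𝒜 m

def HasDegree (f : End R M) (r : ℤ) : Prop :=
  ∀ j : ℤ, ∀ x ∈ 𝒜 j, f x ∈ 𝒜 (r + j)

def HasDegreeLT (f : End R M) (r : ℤ) : Prop :=
  ∀ j : ℤ, ∀ x ∈ 𝒜 j, f x ∈ gradedBelow 𝒜 (r + j)

variable {𝒜}

theorem mem_gradedBelow_of_mem {m c : ℤ} (hmc : m < c) {x : M} (hx : x ∈ 𝒜 m) :
    x ∈ gradedBelow 𝒜 c :=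
  Submodule.mem_iSup_of_mem m (Submodule.mem_iSup_of_mem hmc hx)

theorem gradedBelow_mono : Monotone (gradedBelow 𝒜) :=
  fun _ _ h => biSup_mono fun _ hm => lt_of_lt_of_le hm h

theorem disjoint_gradedBelow (h𝒜 : iSupIndep 𝒜) (c : ℤ) :
    Disjoint (𝒜 c) (gradedBelow 𝒜 c) :=
  h𝒜.disjoint_biSup (lt_irrefl c)

theorem HasDegreeLT.mapsTo_gradedBelow {f : End R M} {r : ℤ} (hf : HasDegreeLT 𝒜 f r) (c : ℤ) :
    gradedBelow 𝒜 c ≤ (gradedBelow 𝒜 (r + c)).comap f :=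
  iSup₂_le fun m hm x hx => gradedBelow_mono (by simp at hm; omega) (hf m x hx)

theorem HasDegree.mapsTo_gradedBelow {f : End R M} {r : ℤ} (hf : HasDegree 𝒜 f r) (c : ℤ) :
    gradedBelow 𝒜 c ≤ (gradedBelow 𝒜 (r + c)).comap f :=
  iSup₂_le fun m hm x hx => mem_gradedBelow_of_mem (by simp at hm; omega) (hf m x hx)

theorem HasDegree.hasDegreeLT {f : End R M} {r s : ℤ} (hf : HasDegree 𝒜 f r) (hrs : r < s) :
    HasDegreeLT 𝒜 f s :=
  fun j x hx => mem_gradedBelow_of_mem (by omega) (hf j x hx)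

theorem hasDegreeLT_sum {s : Finset ℤ} {D : ℤ → End R M} {r : ℤ}
    (hD : ∀ i ∈ s, HasDegreeLT 𝒜 (D i) r) : HasDegreeLT 𝒜 (∑ i ∈ s, D i) r :=
  fun j x hx => by
    rw [LinearMap.sum_apply]
    exact Submodule.sum_mem _ fun i hi => hD i hi j x hx

theorem HasDegree.pow_mem {f : End R M} {r : ℤ} (hf : HasDegree 𝒜 f r) {d : ℤ} {a : M}
    (ha : a ∈ 𝒜 d) (n : ℕ) : (f ^ n) a ∈ 𝒜 (n * r + d) := by
  induction n with
  | zero => simpa using ha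
  | succ n ih =>
    rw [pow_succ', Module.End.mul_apply]
    convert hf _ _ ih using 2
    push_cast
    ring

theorem HasDegree.add_pow_sub_pow_mem_gradedBelow {f g : End R M} {r : ℤ}
    (hf : HasDegree 𝒜 f r) (hg : HasDegreeLT 𝒜 g r) {d : ℤ} {a : M} (ha : a ∈ 𝒜 d) (n : ℕ) :
    ((f + g) ^ n) a - (f ^ n) a ∈ gradedBelow 𝒜 (n * r + d) := by
  induction n with
  | zero => simp
  | succ n ih =>
    have key : ((f + g) ^ (n + 1)) a - (f ^ (n + 1)) a
        = f (((f + g) ^ n) a - (f ^ n) a) + g (((f + g) ^ n) a - (f ^ n) a) + g ((f ^ n) a) := by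
      simp only [pow_succ', Module.End.mul_apply, map_sub, LinearMap.add_apply]
      abel
    rw [key, show ((n + 1 : ℕ) : ℤ) * r + d = r + (n * r + d) by push_cast; ring]
    exact add_mem (add_mem (hf.mapsTo_gradedBelow _ ih) (hg.mapsTo_gradedBelow _ ih))
      (hg _ _ (hf.pow_mem ha n))

theorem HasDegree.isLocallyNilpotent_of_add {f g : End R M} {r : ℤ}
    (h𝒜 : DirectSum.IsInternal 𝒜) (hf : HasDegree 𝒜 f r) (hg : HasDegreeLT 𝒜 g r)
    (hfg : (f + g).IsLocallyNilpotent) : f.IsLocallyNilpotent := by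
  refine isLocallyNilpotent_of_iSup_eq_top h𝒜.submodule_iSup_eq_top fun d a ha => ?_
  obtain ⟨n, hn⟩ := hfg a
  have hlow := hf.add_pow_sub_pow_mem_gradedBelow hg ha n
  rw [hn, zero_sub, neg_mem_iff] at hlow
  exact ⟨n, Submodule.disjoint_def.1 (disjoint_gradedBelow h𝒜.submodule_iSupIndep _) _ (hf.pow_mem ha n) hlow⟩

theorem isLocallyNilpotent_of_isLocallyNilpotent_sum (h𝒜 : DirectSum.IsInternal 𝒜)
    {D : ℤ → End R M} {s : Finset ℤ} (hD : ∀ i ∈ s, HasDegree 𝒜 (D i) i)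
    (hcomm : ∀ i ∈ s, ∀ j ∈ s, Commute (D i) (D j))
    (hs : (∑ i ∈ s, D i).IsLocallyNilpotent) : ∀ i ∈ s, (D i).IsLocallyNilpotent := by
  induction s using Finset.induction_on_max with
  | empty => simp
  | insert a s has ih =>
    have hmem : ∀ i ∈ s, i ∈ insert a s := fun i hi => Finset.mem_insert_of_mem hi
    have hDa := hD a (s.mem_insert_self a)
    rw [Finset.sum_insert fun h => lt_irrefl a (has a h)] at hs
    have ha : (D a).IsLocallyNilpotent :=
      hDa.isLocallyNilpotent_of_add h𝒜
        (hasDegreeLT_sum fun i hi => (hD i (hmem i hi)).hasDegreeLT (has i hi)) hs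
    have hcomm_a : Commute (D a + ∑ i ∈ s, D i) (D a) :=
      (Commute.refl _).add_left
        (Commute.sum_left _ _ _ fun i hi => hcomm i (hmem i hi) a (s.mem_insert_self a))
    have hrest := hs.sub hcomm_a ha
    rw [add_sub_cancel_left] at hrest
    exact Finset.forall_mem_insert _ _ _ |>.2 ⟨ha, ih (fun i hi => hD i (hmem i hi))
      (fun i hi j hj => hcomm i (hmem i hi) j (hmem j hj)) hrest⟩

theorem HasDegree.commutator_eq (h𝒜 : ⨆ i, 𝒜 i = ⊤) {δ : End R M}
    (hδ : ∀ i : ℤ, ∀ a ∈ 𝒜 i, δ a = (i : R) • a) {f : End R M} {r : ℤ} (hf : HasDegree 𝒜 f r) :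
    δ * f - f * δ = (r : R) • f := by
  rw [← LinearMap.eqLocus_eq_top, eq_top_iff, ← h𝒜]
  refine iSup_le fun j a ha => LinearMap.mem_eqLocus.2 ?_
  simp only [LinearMap.sub_apply, Module.End.mul_apply, LinearMap.smul_apply,
    hδ _ _ (hf j a ha), hδ j a ha, map_smul]
  push_cast
  rw [add_smul, add_sub_cancel_right]

end Graded

theorem leibniz_sum_smul {R A ι : Type*} [CommRing R] [Ring A] [Algebra R A] (s : Finset ι)
    (c : ι → R) {D : ι → End R A} (hD : ∀ i ∈ s, ∀ x y : A, D i (x * y) = x * D i y + D i x * y)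
    (x y : A) :
    (∑ i ∈ s, c i • D i) (x * y) = x * (∑ i ∈ s, c i • D i) y + (∑ i ∈ s, c i • D i) x * y := by
  simp only [LinearMap.sum_apply, LinearMap.smul_apply, Finset.mul_sum, Finset.sum_mul,
    ← Finset.sum_add_distrib]
  refine Finset.sum_congr rfl fun i hi => ?_
  rw [hD i hi, smul_add, mul_smul_comm, smul_mul_assoc]

theorem primitive_of_locally_nilpotent_derivation_general
    {A : Type} [Ring A] [Algebra ℂ A]
    (𝒜 : ℤ → Submodule ℂ A)
    (hint : DirectSum.IsInternal 𝒜)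
    (δ : Module.End ℂ A)
    (hδ : ∀ i : ℤ, ∀ a ∈ 𝒜 i, δ a = (i : ℂ) • a)
    (p q : ℤ) (hp : 0 < p)
    (D : ℤ → Module.End ℂ A)
    (hder : ∀ i : ℤ, ∀ x y : A, D i (x * y) = x * D i y + D i x * y)
    (hhom : ∀ (i j : ℤ), ∀ x ∈ 𝒜 j, D i x ∈ 𝒜 (i + j))
    (hcomm : ∀ i j : ℤ, D i * D j = D j * D i)
    (hln : ∀ a : A, ∃ n : ℕ, ((∑ i ∈ Finset.Icc p q, D i) ^ n) a = 0) :
    (∀ x y : A, (∑ i ∈ Finset.Icc p q, ((i : ℂ)⁻¹) • D i) (x * y)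
        = x * (∑ i ∈ Finset.Icc p q, ((i : ℂ)⁻¹) • D i) y
          + (∑ i ∈ Finset.Icc p q, ((i : ℂ)⁻¹) • D i) x * y) ∧
    (∀ a : A, ∃ n : ℕ, ((∑ i ∈ Finset.Icc p q, ((i : ℂ)⁻¹) • D i) ^ n) a = 0) ∧
    (δ * (∑ i ∈ Finset.Icc p q, ((i : ℂ)⁻¹) • D i)
        - (∑ i ∈ Finset.Icc p q, ((i : ℂ)⁻¹) • D i) * δ
      = ∑ i ∈ Finset.Icc p q, D i) := by
  have hdeg (i : ℤ) : HasDegree 𝒜 (D i) i := hhom i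
  have hD_lnd : ∀ i ∈ Finset.Icc p q, (D i).IsLocallyNilpotent :=
    isLocallyNilpotent_of_isLocallyNilpotent_sum hint (fun i _ => hdeg i)
      (fun i _ j _ => hcomm i j) hln
  refine ⟨leibniz_sum_smul _ _ fun i _ => hder i, ?_, ?_⟩
  · exact IsLocallyNilpotent.sum (fun i _ j _ => (Commute.smul_left (hcomm i j) _).smul_right _)
      fun i hi => (hD_lnd i hi).smul _
  · rw [Finset.mul_sum, Finset.sum_mul, ← Finset.sum_sub_distrib]
    refine Finset.sum_congr rfl fun i hi => ?_
    have hi0 : (i : ℂ) ≠ 0 := Int.cast_ne_zero.2 (by grind)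
    rw [Algebra.mul_smul_comm, Algebra.smul_mul_assoc, ← smul_sub,
      (hdeg i).commutator_eq hint.submodule_iSup_eq_top hδ, smul_smul, inv_mul_cancel₀ hi0,
      one_smul]

/-- Let `A = ⊕_{i∈ℤ} A_i` be a ℤ-graded ℂ-algebra with grading derivation `δ`,
and `∂ = Σ_{i=p}^{q} ∂_i` a locally nilpotent derivation with pairwise commuting homogeneous
components `∂_i` of strictly positive degrees (`0 < p ≤ i`). Then `∂' = Σ_{i=p}^{q} ∂_i/i` is a
locally nilpotent derivation with `[δ,∂'] = ∂`. -/
theorem primitive_of_locally_nilpotent_derivation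
    {A : Type} [Ring A] [Algebra ℂ A]
    (𝒜 : ℤ → Submodule ℂ A)
    (hint : DirectSum.IsInternal 𝒜)
    (δ : Module.End ℂ A)
    (hδ : ∀ i : ℤ, ∀ a ∈ 𝒜 i, δ a = (i : ℂ) • a)
    (p q : ℤ) (hpq : p ≤ q) (hp : 0 < p)
    (D : ℤ → Module.End ℂ A)
    (hder : ∀ i : ℤ, ∀ x y : A, D i (x * y) = x * D i y + D i x * y)
    (hhom : ∀ (i j : ℤ), ∀ x ∈ 𝒜 j, D i x ∈ 𝒜 (i + j))
    (hcomm : ∀ i j : ℤ, D i * D j = D j * D i)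
    (hln : ∀ a : A, ∃ n : ℕ, ((∑ i ∈ Finset.Icc p q, D i) ^ n) a = 0) :
    (∀ x y : A, (∑ i ∈ Finset.Icc p q, ((i : ℂ)⁻¹) • D i) (x * y)
        = x * (∑ i ∈ Finset.Icc p q, ((i : ℂ)⁻¹) • D i) y
          + (∑ i ∈ Finset.Icc p q, ((i : ℂ)⁻¹) • D i) x * y) ∧
    (∀ a : A, ∃ n : ℕ, ((∑ i ∈ Finset.Icc p q, ((i : ℂ)⁻¹) • D i) ^ n) a = 0) ∧
    (δ * (∑ i ∈ Finset.Icc p q, ((i : ℂ)⁻¹) • D i)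
        - (∑ i ∈ Finset.Icc p q, ((i : ℂ)⁻¹) • D i) * δ
      = ∑ i ∈ Finset.Icc p q, D i) :=
  primitive_of_locally_nilpotent_derivation_general 𝒜 hint δ hδ p q hp D hder hhom hcomm hln
end

section
/- Let ∂ be a locally nilpotent derivation of a commutative ring A of characteristic 0 and δ any derivation with [[δ,∂],∂] = 0. Then δ ∘ exp(∂) = exp(∂) ∘ (δ + [δ,∂]) as linear maps on A. -/
/-!
With `C = [δ, ∂]` commuting with `∂`, induction gives `[δ, ∂ⁱ⁺¹] = (i + 1) ∂ⁱ C`, so commuting `δ`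
past the truncated exponential `Tₙ = ∑_{i<n} ∂ⁱ/i!` gives `δ Tₙ₊₁ = Tₙ₊₁ δ + Tₙ C`. Local
nilpotency lets one choose `n` so large that `Tₙ` and `Tₙ₊₁` agree with `exp ∂` on all vectors
involved.
-/

open Finset Nat

section Commutator

variable {R : Type*} [Ring R] {a d : R}

theorem mul_pow_succ_eq_of_commute_commutator (h : Commute (a * d - d * a) d) (n : ℕ) :
    a * d ^ (n + 1) = d ^ (n + 1) * a + (n + 1) • (d ^ n * (a * d - d * a)) := by
  induction n with
  | zero => simp
  | succ n ih =>
    calc a * d ^ (n + 2) = (a * d ^ (n + 1)) * d := by rw [pow_succ _ (n + 1), mul_assoc]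
      _ = d ^ (n + 1) * (a * d) + (n + 1) • (d ^ n * ((a * d - d * a) * d)) := by
        rw [ih, add_mul, smul_mul_assoc, mul_assoc, mul_assoc]
      _ = d ^ (n + 2) * a + (n + 2) • (d ^ (n + 1) * (a * d - d * a)) := by
        rw [h.eq, ← mul_assoc (d ^ n), ← pow_succ, succ_nsmul _ (n + 1)]
        noncomm_ring

end Commutator

section TruncatedExp

variable {R : Type*} [Ring R] [Algebra ℚ R]

def truncatedExp (d : R) (n : ℕ) : R :=
  ∑ i ∈ range n, (i ! : ℚ)⁻¹ • d ^ i

theorem mul_truncatedExp_succ {a d : R} (h : Commute (a * d - d * a) d) (n : ℕ) :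
    a * truncatedExp d (n + 1) =
      truncatedExp d (n + 1) * a + truncatedExp d n * (a * d - d * a) := by
  have hterm : ∀ i : ℕ, ((i + 1)! : ℚ)⁻¹ • (a * d ^ (i + 1)) =
      ((i + 1)! : ℚ)⁻¹ • (d ^ (i + 1) * a) + (i ! : ℚ)⁻¹ • (d ^ i * (a * d - d * a)) := by
    intro i
    rw [mul_pow_succ_eq_of_commute_commutator h, smul_add, ← Nat.cast_smul_eq_nsmul ℚ,
      smul_smul, Nat.factorial_succ]
    congr 2
    push_cast
    field_simp
  simp only [truncatedExp, Finset.mul_sum, Finset.sum_mul, mul_smul_comm, smul_mul_assoc]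
  rw [sum_range_succ', sum_range_succ' (fun i => ((i ! : ℚ)⁻¹ • (d ^ i * a)))]
  simp only [hterm, sum_add_distrib, pow_zero, mul_one, one_mul]
  abel

end TruncatedExp

theorem truncatedExp_apply {A : Type*} [AddCommGroup A] [Module ℚ A]
    (D : Module.End ℚ A) (n : ℕ) (x : A) :
    truncatedExp D n x = ∑ i ∈ range n, (i ! : ℚ)⁻¹ • (D ^ i) x := by
  simp [truncatedExp]

theorem delta_comp_exp_general
    {A : Type} [CommRing A] [Algebra ℚ A]
    (δ D : Module.End ℚ A)
    (hln : ∀ a : A, ∃ n : ℕ, (D ^ n) a = 0)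
    (hcomm : (δ * D - D * δ) * D = D * (δ * D - D * δ))
    (E : Module.End ℚ A)
    (hE : ∀ (a : A) (N : ℕ), (D ^ N) a = 0 →
      E a = ∑ i ∈ Finset.range N, ((Nat.factorial i : ℚ)⁻¹) • (D ^ i) a) :
    δ * E = E * (δ + (δ * D - D * δ)) := by
  set C := δ * D - D * δ
  have hE_eq : ∀ (y : A) (k m : ℕ), (D ^ k) y = 0 → k ≤ m → E y = truncatedExp D m y :=
    fun y k m hy hkm => by
      rw [hE y m (Module.End.pow_map_zero_of_le hkm hy), truncatedExp_apply]
  ext x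
  obtain ⟨n₁, h₁⟩ := hln x
  obtain ⟨n₂, h₂⟩ := hln (δ x)
  obtain ⟨n₃, h₃⟩ := hln (C x)
  set n := n₁ + n₂ + n₃
  calc δ (E x) = (δ * truncatedExp D (n + 1)) x := by rw [hE_eq x n₁ (n + 1) h₁ (by omega)]; rfl
    _ = truncatedExp D (n + 1) (δ x) + truncatedExp D n (C x) := by
      rw [mul_truncatedExp_succ hcomm]; rfl
    _ = E (δ x) + E (C x) := by
      rw [hE_eq (δ x) n₂ (n + 1) h₂ (by omega), hE_eq (C x) n₃ n h₃ (by omega)]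
    _ = E ((δ + C) x) := by simp

/-- For a locally nilpotent derivation `∂` on a commutative ring `A` containing ℚ
and any derivation `δ` with `[[δ,∂],∂] = 0`, one has `δ ∘ exp(∂) = exp(∂) ∘ (δ + [δ,∂])`. -/
theorem delta_comp_exp
    {A : Type} [CommRing A] [Algebra ℚ A]
    (δ D : Module.End ℚ A)
    (hδ : ∀ x y : A, δ (x * y) = x * δ y + δ x * y)
    (hD : ∀ x y : A, D (x * y) = x * D y + D x * y)
    (hln : ∀ a : A, ∃ n : ℕ, (D ^ n) a = 0)
    (hcomm : (δ * D - D * δ) * D = D * (δ * D - D * δ))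
    (E : Module.End ℚ A)
    (hE : ∀ (a : A) (N : ℕ), (D ^ N) a = 0 →
      E a = ∑ i ∈ Finset.range N, ((Nat.factorial i : ℚ)⁻¹) • (D ^ i) a) :
    δ * E = E * (δ + (δ * D - D * δ)) :=
  delta_comp_exp_general δ D hln hcomm E hE
end
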